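/- Suppose α > N and diam Ω < e^(1/(N−α)). Under the reflection setup, assume Ω_λ contains a ball B with positive radius and that there is δ > 0 with |x_λ − y| ≥ δ for all y ∈ B, where x ∈ Σ_λ with x₁ < λ. Then for the logarithmic Riesz kernel, the difference quotient satisfies (u(x_λ) − u(x))/(2(λ − x₁)) ≤ −C for a constant C > 0 depending only on B, δ, diam Ω, α, N (uniformly as x₁ → λ). -/

import Mathlib

open MeasureTheory

/-- Reflection of `x` across the hyperplane `{z : z 0 = l}`. -/
noncomputable def reflH {N : ℕ} [NeZero N] (l : ℝ) (x : EuclideanSpace ℝ (Fin N)) :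
    EuclideanSpace ℝ (Fin N) :=
  WithLp.toLp 2 (Function.update x.ofLp 0 (2 * l - x 0))

/-- `Σ_λ = {x ∈ Ω : x₁ < λ}`. -/
def sigmaL {N : ℕ} [NeZero N] (Ω : Set (EuclideanSpace ℝ (Fin N))) (l : ℝ) :
    Set (EuclideanSpace ℝ (Fin N)) :=
  {x ∈ Ω | x 0 < l}

/-- `Ω_λ = Ω \ closure (Σ_λ ∪ Σ'_λ)`. -/
noncomputable def omegaL {N : ℕ} [NeZero N] (Ω : Set (EuclideanSpace ℝ (Fin N))) (l : ℝ) :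
    Set (EuclideanSpace ℝ (Fin N)) :=
  Ω \ closure (sigmaL Ω l ∪ reflH l '' sigmaL Ω l)

/-!
Write `β = α - N` and `k s = s ^ β * log (1 / s)`. Its derivative `-s ^ (β - 1) * (β log s + 1)` is
positive on `(0, e^(-1/β))`, an interval containing every distance in `Ω`, and bounded below by
some `m > 0` on `[δ, diam Ω]`. The reflection `x ↦ x_λ` is a measure-preserving isometry fixing
`Σ_λ ∪ Σ'_λ`, so the two potentials agree on that set, and the difference of the potentials is the
integral of `k |x_λ - y| - k |x - y|` over the rest of `Ω`. There `y₁ ≥ λ`, so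
`|x_λ - y| ≤ |x - y|` and the integrand is nonpositive. On `B(c, r/2)` moreover `y₁ - λ ≥ r/2`, and
`|x - y|² - |x_λ - y|² = 4 (λ - x₁) (y₁ - λ)` makes `|x - y| - |x_λ - y|` at least
`(λ - x₁) r / e^(-1/β)`, so the integrand is at most `-m (λ - x₁) r / e^(-1/β)`.
-/

open Metric Set Real

section LogRieszKernel

noncomputable def logRieszKernel (β s : ℝ) : ℝ := s ^ β * log (1 / s)

lemma logRieszKernel_eq_neg_log_mul_rpow (β : ℝ) :
    logRieszKernel β = fun s => -(log s * s ^ β) := by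
  funext s; rw [logRieszKernel, one_div, log_inv]; ring

lemma hasDerivAt_logRieszKernel (β : ℝ) {s : ℝ} (hs : 0 < s) :
    HasDerivAt (logRieszKernel β) (-(s ^ (β - 1) * (β * log s + 1))) s := by
  rw [logRieszKernel_eq_neg_log_mul_rpow]
  refine ((hasDerivAt_log hs.ne').mul (hasDerivAt_rpow_const (p := β) (Or.inl hs.ne'))).neg
    |>.congr_deriv ?_
  rw [rpow_sub_one hs.ne']; field_simp; ring

lemma continuousOn_logRieszKernel {β : ℝ} (hβ : 0 < β) :
    ContinuousOn (logRieszKernel β) (Ici 0) := by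
  intro s hs
  rcases (mem_Ici.1 hs).eq_or_lt with rfl | hs
  · rw [← Ioi_insert, continuousWithinAt_insert_self, ContinuousWithinAt,
      logRieszKernel_eq_neg_log_mul_rpow]
    simpa using (tendsto_log_mul_rpow_nhdsGT_zero hβ).neg
  · exact (hasDerivAt_logRieszKernel β hs).continuousAt.continuousWithinAt

lemma rpow_sub_one_mul_log_add_one_neg {β s : ℝ} (hβ : 0 < β) (hs : 0 < s)
    (hsE : s < exp (-(1 / β))) : s ^ (β - 1) * (β * log s + 1) < 0 := by
  have hlog : β * log s < -1 := by
    have := mul_lt_mul_of_pos_left ((log_lt_iff_lt_exp hs).2 hsE) hβ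
    rwa [mul_neg, mul_one_div_cancel hβ.ne'] at this
  exact mul_neg_of_pos_of_neg (rpow_pos_of_pos hs _) (by linarith)

lemma monotoneOn_logRieszKernel {β : ℝ} (hβ : 0 < β) :
    MonotoneOn (logRieszKernel β) (Icc 0 (exp (-(1 / β)))) := by
  refine monotoneOn_of_deriv_nonneg (convex_Icc _ _)
    ((continuousOn_logRieszKernel hβ).mono Icc_subset_Ici_self)
    (fun s hs => ?_) (fun s hs => ?_) <;> rw [interior_Icc] at hs
  · exact (hasDerivAt_logRieszKernel β hs.1).differentiableAt.differentiableWithinAt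
  · rw [(hasDerivAt_logRieszKernel β hs.1).deriv]
    exact (neg_pos.2 (rpow_sub_one_mul_log_add_one_neg hβ hs.1 hs.2)).le

lemma exists_pos_mul_sub_le_logRieszKernel_sub {β δ D : ℝ} (hβ : 0 < β) (hδ : 0 < δ)
    (hD : D < exp (-(1 / β))) :
    ∃ m > 0, ∀ a ∈ Icc δ D, ∀ b ∈ Icc δ D, a ≤ b →
      m * (b - a) ≤ logRieszKernel β b - logRieszKernel β a := by
  rcases (Icc δ D).eq_empty_or_nonempty with hempty | hne
  · exact ⟨1, one_pos, by simp [hempty]⟩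
  have hpos : ∀ s ∈ Icc δ D, 0 < s := fun s hs => hδ.trans_le hs.1
  have hcont : ContinuousOn (fun s => -(s ^ (β - 1) * (β * log s + 1))) (Icc δ D) :=
    fun s hs => (((continuousAt_rpow_const _ _ (Or.inl (hpos s hs).ne')).mul
      ((continuousAt_log (hpos s hs).ne').const_mul β |>.add_const 1)).neg).continuousWithinAt
  obtain ⟨s₀, hs₀, hmin⟩ := isCompact_Icc.exists_isMinOn hne hcont
  refine ⟨_, neg_pos.2 (rpow_sub_one_mul_log_add_one_neg hβ (hpos s₀ hs₀) (hs₀.2.trans_lt hD)),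
    (convex_Icc δ D).mul_sub_le_image_sub_of_le_deriv
      (fun s hs => (hasDerivAt_logRieszKernel β (hpos s hs)).continuousAt.continuousWithinAt)
      (fun s hs => ?_) (fun s hs => ?_)⟩ <;>
    have hs' := interior_subset hs
  · exact (hasDerivAt_logRieszKernel β (hpos s hs')).differentiableAt.differentiableWithinAt
  · rw [(hasDerivAt_logRieszKernel β (hpos s hs')).deriv]
    exact hmin hs'

lemma integrableOn_logRieszKernel_norm_sub {E : Type*} [NormedAddCommGroup E] [MeasurableSpace E]
    [BorelSpace E] [ProperSpace E] {μ : Measure E} [IsFiniteMeasureOnCompacts μ] {β : ℝ}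
    (hβ : 0 < β) {Ω : Set E} (hΩ : Bornology.IsBounded Ω) (x : E) :
    IntegrableOn (fun y => logRieszKernel β ‖x - y‖) Ω μ := by
  have hcont : Continuous fun y => logRieszKernel β ‖x - y‖ :=
    (continuousOn_logRieszKernel hβ).comp_continuous (by fun_prop) fun y => norm_nonneg _
  exact (hcont.continuousOn.integrableOn_compact hΩ.isCompact_closure).mono_set subset_closure

end LogRieszKernel

section Reflection

variable {N : ℕ} [NeZero N]

lemma reflH_eq_add_smul_single (l : ℝ) (x : EuclideanSpace ℝ (Fin N)) :
    reflH l x = x + (2 * (l - x 0)) • EuclideanSpace.single 0 1 := by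
  ext i
  rcases eq_or_ne i 0 with rfl | hi
  · simp only [reflH, Function.update_self, PiLp.add_apply, PiLp.smul_apply,
      PiLp.single_eq_same, smul_eq_mul, mul_one]
    ring
  · simp [reflH, hi]

lemma norm_add_smul_single_sq (v : EuclideanSpace ℝ (Fin N)) (t : ℝ) :
    ‖v + t • EuclideanSpace.single 0 1‖ ^ 2 = ‖v‖ ^ 2 + 2 * t * v 0 + t ^ 2 := by
  rw [norm_add_sq_real, inner_smul_right, EuclideanSpace.inner_single_right, norm_smul,
    PiLp.norm_single]
  simp only [ringHom_apply, one_mul, norm_eq_abs, norm_one, mul_one, sq_abs]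
  ring

lemma norm_sub_sq_sub_norm_reflH_sub_sq (l : ℝ) (x y : EuclideanSpace ℝ (Fin N)) :
    ‖x - y‖ ^ 2 - ‖reflH l x - y‖ ^ 2 = 4 * (l - x 0) * (y 0 - l) := by
  rw [reflH_eq_add_smul_single, add_sub_right_comm, norm_add_smul_single_sq]
  simp only [PiLp.sub_apply]
  ring

lemma isometry_reflH (l : ℝ) : Isometry (reflH (N := N) l) := by
  refine Isometry.of_dist_eq fun x y => ?_
  rw [dist_eq_norm, dist_eq_norm, ← sq_eq_sq₀ (norm_nonneg _) (norm_nonneg _),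
    reflH_eq_add_smul_single, reflH_eq_add_smul_single, add_sub_add_comm, ← sub_smul,
    norm_add_smul_single_sq]
  simp only [PiLp.sub_apply]
  ring

lemma reflH_involutive (l : ℝ) : Function.Involutive (reflH (N := N) l) := fun x => by
  ext i
  rcases eq_or_ne i 0 with rfl | _ <;> simp [reflH]

noncomputable def reflHIsometryEquiv (l : ℝ) :
    EuclideanSpace ℝ (Fin N) ≃ᵢ EuclideanSpace ℝ (Fin N) where
  toFun := reflH l
  invFun := reflH l
  left_inv := reflH_involutive l
  right_inv := reflH_involutive l
  isometry_toFun := isometry_reflH l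

lemma measurePreserving_reflH (l : ℝ) : MeasurePreserving (reflH (N := N) l) := by
  have h := (reflHIsometryEquiv (N := N) l).measurePreserving_euclideanHausdorffMeasure N
  rwa [EuclideanSpace.euclideanHausdorffMeasure_eq_volume] at h

lemma measurableEmbedding_reflH (l : ℝ) : MeasurableEmbedding (reflH (N := N) l) :=
  (reflHIsometryEquiv l).toHomeomorph.measurableEmbedding

lemma setIntegral_norm_reflH_sub (f : ℝ → ℝ) {l : ℝ} {T : Set (EuclideanSpace ℝ (Fin N))}
    (hT : reflH l ⁻¹' T = T) (x : EuclideanSpace ℝ (Fin N)) :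
    ∫ y in T, f ‖reflH l x - y‖ = ∫ y in T, f ‖x - y‖ := by
  rw [← (measurePreserving_reflH l).setIntegral_preimage_emb (measurableEmbedding_reflH l), hT]
  simp_rw [← dist_eq_norm, (isometry_reflH l).dist_eq]

end Reflection

section Domain

variable {N : ℕ} [NeZero N] {Ω : Set (EuclideanSpace ℝ (Fin N))} {l : ℝ}

lemma norm_reflH_sub_le_norm_sub {x y : EuclideanSpace ℝ (Fin N)} (hx : x 0 ≤ l)
    (hy : l ≤ y 0) : ‖reflH l x - y‖ ≤ ‖x - y‖ := by
  have := norm_sub_sq_sub_norm_reflH_sub_sq l x y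
  nlinarith [norm_nonneg (x - y), norm_nonneg (reflH l x - y)]

lemma two_mul_mul_le_mul_norm_sub_sub_norm_reflH_sub {x y : EuclideanSpace ℝ (Fin N)} {M : ℝ}
    (hx : x 0 ≤ l) (hy : l ≤ y 0) (hxM : ‖x - y‖ ≤ M) (hzM : ‖reflH l x - y‖ ≤ M) :
    2 * (l - x 0) * (y 0 - l) ≤ M * (‖x - y‖ - ‖reflH l x - y‖) := by
  have := norm_sub_sq_sub_norm_reflH_sub_sq l x y
  have := norm_reflH_sub_le_norm_sub hx hy
  nlinarith [norm_nonneg (x - y), norm_nonneg (reflH l x - y)]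

lemma preimage_reflH_sigmaL_union_image :
    reflH l ⁻¹' (sigmaL Ω l ∪ reflH l '' sigmaL Ω l) = sigmaL Ω l ∪ reflH l '' sigmaL Ω l := by
  rw [(reflH_involutive l).image_eq_preimage_symm, preimage_union, ← preimage_comp,
    (reflH_involutive l).comp_self, preimage_id, union_comm]

lemma measurableSet_sigmaL_union_image (hΩ : MeasurableSet Ω) :
    MeasurableSet (sigmaL Ω l ∪ reflH l '' sigmaL Ω l) := by
  have hS : MeasurableSet (sigmaL Ω l) :=
    hΩ.inter (measurableSet_lt (PiLp.continuous_apply 2 _ 0).measurable measurable_const)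
  exact hS.union ((measurableEmbedding_reflH l).measurableSet_image.2 hS)

lemma le_apply_zero_of_mem_sdiff {y : EuclideanSpace ℝ (Fin N)}
    (hy : y ∈ Ω \ (sigmaL Ω l ∪ reflH l '' sigmaL Ω l)) : l ≤ y 0 :=
  not_lt.1 fun h => hy.2 (Or.inl ⟨hy.1, h⟩)

lemma omegaL_subset_sdiff : omegaL Ω l ⊆ Ω \ (sigmaL Ω l ∪ reflH l '' sigmaL Ω l) :=
  sdiff_subset_sdiff_right subset_closure

lemma add_le_apply_zero_of_ball_subset {c y : EuclideanSpace ℝ (Fin N)} {r t : ℝ}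
    (h : ball c r ⊆ {w | l ≤ w 0}) (ht : 0 ≤ t) (hy : dist y c + t < r) : l + t ≤ y 0 := by
  have hw : y - t • EuclideanSpace.single 0 1 ∈ ball c r := by
    rw [mem_ball, dist_eq_norm, sub_right_comm]
    calc ‖y - c - t • EuclideanSpace.single 0 1‖
        ≤ ‖y - c‖ + ‖t • EuclideanSpace.single (0 : Fin N) (1 : ℝ)‖ := norm_sub_le _ _
      _ = dist y c + t := by
        rw [norm_smul, PiLp.norm_single, norm_one, mul_one, norm_of_nonneg ht, dist_eq_norm]
      _ < r := hy
  have := h hw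
  simp only [mem_ofPred_eq, PiLp.sub_apply, PiLp.smul_apply, PiLp.single_eq_same, smul_eq_mul,
    mul_one] at this
  linarith

lemma mul_two_mul_mul_le_mul_sub_norm_reflH_sub {f : ℝ → ℝ} {δ D M m : ℝ} (hm : 0 ≤ m)
    (hslope : ∀ a ∈ Icc δ D, ∀ b ∈ Icc δ D, a ≤ b → m * (b - a) ≤ f b - f a)
    {x y : EuclideanSpace ℝ (Fin N)} (hx : x 0 ≤ l) (hy : l ≤ y 0)
    (hδ : δ ≤ ‖reflH l x - y‖) (hxD : ‖x - y‖ ≤ D) (hDM : D ≤ M) :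
    m * (2 * (l - x 0) * (y 0 - l)) ≤ M * (f ‖x - y‖ - f ‖reflH l x - y‖) := by
  have hle := norm_reflH_sub_le_norm_sub hx hy
  have hgap := two_mul_mul_le_mul_norm_sub_sub_norm_reflH_sub hx hy (hxD.trans hDM)
    ((hle.trans hxD).trans hDM)
  have hk := hslope _ ⟨hδ, hle.trans hxD⟩ _ ⟨hδ.trans hle, hxD⟩ hle
  have hM : 0 ≤ M := (norm_nonneg _).trans (hxD.trans hDM)
  calc m * (2 * (l - x 0) * (y 0 - l)) ≤ m * (M * (‖x - y‖ - ‖reflH l x - y‖)) :=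
        mul_le_mul_of_nonneg_left hgap hm
    _ = M * (m * (‖x - y‖ - ‖reflH l x - y‖)) := by ring
    _ ≤ M * (f ‖x - y‖ - f ‖reflH l x - y‖) := mul_le_mul_of_nonneg_left hk hM

end Domain

section SetIntegral

variable {X : Type*} [MeasurableSpace X] {μ : Measure X} {s t : Set X}

lemma setIntegral_sub_setIntegral_eq_setIntegral_sdiff {E : Type*} [NormedAddCommGroup E]
    [NormedSpace ℝ E] {f g : X → E} (ht : MeasurableSet t) (hts : t ⊆ s)
    (hf : IntegrableOn f s μ) (hg : IntegrableOn g s μ)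
    (hfg : ∫ x in t, f x ∂μ = ∫ x in t, g x ∂μ) :
    ∫ x in s, f x ∂μ - ∫ x in s, g x ∂μ = ∫ x in s \ t, (f x - g x) ∂μ := by
  rw [integral_sub (hf.mono_set sdiff_subset) (hg.mono_set sdiff_subset),
    setIntegral_sdiff ht hf hts, setIntegral_sdiff ht hg hts, hfg]
  abel

lemma setIntegral_le_neg_mul_measureReal_of_subset {f : X → ℝ} {a : ℝ}
    (hf : IntegrableOn f s μ) (hs : MeasurableSet s) (ht : MeasurableSet t) (hts : t ⊆ s)
    (hμt : μ t ≠ ⊤) (hf_nonpos : ∀ x ∈ s, f x ≤ 0) (hf_le : ∀ x ∈ t, f x ≤ -a) :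
    ∫ x in s, f x ∂μ ≤ -(a * μ.real t) :=
  calc ∫ x in s, f x ∂μ ≤ ∫ x in t, f x ∂μ := by
        have := setIntegral_mono_set (f := fun x => -f x) hf.neg
          (ae_restrict_of_forall_mem hs fun x hx => neg_nonneg.2 (hf_nonpos x hx))
          hts.eventuallyLE
        simpa only [integral_neg, neg_le_neg_iff] using this
    _ ≤ ∫ _ in t, -a ∂μ :=
        setIntegral_mono_on (hf.mono_set hts) (integrableOn_const hμt) ht hf_le
    _ = -(a * μ.real t) := by rw [setIntegral_const, smul_eq_mul]; ring

end SetIntegral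

lemma integral_logRieszKernel_reflH_sub_le {N : ℕ} [NeZero N]
    {Ω : Set (EuclideanSpace ℝ (Fin N))} (hΩo : IsOpen Ω) (hΩb : Bornology.IsBounded Ω)
    {β : ℝ} (hβ : 0 < β) (hdiam : diam Ω < exp (-(1 / β))) {l : ℝ}
    (hrefl : reflH l '' sigmaL Ω l ⊆ Ω) {c : EuclideanSpace ℝ (Fin N)} {r : ℝ} (hr : 0 < r)
    (hB : ball c r ⊆ omegaL Ω l) {δ m : ℝ} (hm : 0 ≤ m)
    (hslope : ∀ a ∈ Icc δ (diam Ω), ∀ b ∈ Icc δ (diam Ω), a ≤ b →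
      m * (b - a) ≤ logRieszKernel β b - logRieszKernel β a)
    {x : EuclideanSpace ℝ (Fin N)} (hx : x ∈ Ω) (hxl : x 0 < l)
    (hxδ : ∀ y ∈ ball c r, δ ≤ ‖reflH l x - y‖) :
    (∫ y in Ω, logRieszKernel β ‖reflH l x - y‖) - ∫ y in Ω, logRieszKernel β ‖x - y‖
      ≤ -(m * (l - x 0) * r / exp (-(1 / β)) * volume.real (ball c (r / 2))) := by
  set T := sigmaL Ω l ∪ reflH l '' sigmaL Ω l
  have hTm : MeasurableSet T := measurableSet_sigmaL_union_image hΩo.measurableSet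
  have hxy : ∀ {y}, y ∈ Ω → ‖x - y‖ ≤ diam Ω := fun hy => by
    rw [← dist_eq_norm]; exact dist_le_diam_of_mem hΩb hx hy
  have hBR : ball c (r / 2) ⊆ Ω \ T :=
    (ball_subset_ball (by linarith)).trans (hB.trans omegaL_subset_sdiff)
  have hIx := integrableOn_logRieszKernel_norm_sub (μ := volume) hβ hΩb x
  have hIz := integrableOn_logRieszKernel_norm_sub (μ := volume) hβ hΩb (reflH l x)
  rw [setIntegral_sub_setIntegral_eq_setIntegral_sdiff hTm (union_subset (fun y hy => hy.1) hrefl)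
    hIz hIx (setIntegral_norm_reflH_sub _ preimage_reflH_sigmaL_union_image x)]
  refine setIntegral_le_neg_mul_measureReal_of_subset ((hIz.sub hIx).mono_set sdiff_subset)
    (hΩo.measurableSet.diff hTm) measurableSet_ball hBR measure_ball_lt_top.ne
    (fun y hy => ?_) (fun y hy => ?_)
  · have hle := norm_reflH_sub_le_norm_sub hxl.le (le_apply_zero_of_mem_sdiff hy)
    have hxE := (hxy hy.1).trans hdiam.le
    exact sub_nonpos.2 <| monotoneOn_logRieszKernel hβ ⟨norm_nonneg _, hle.trans hxE⟩
      ⟨norm_nonneg _, hxE⟩ hle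
  · have hyl : l + r / 2 ≤ y 0 :=
      add_le_apply_zero_of_ball_subset
        (fun w hw => le_apply_zero_of_mem_sdiff (omegaL_subset_sdiff (hB hw))) (by linarith)
        (by rw [mem_ball] at hy; linarith)
    have h := mul_two_mul_mul_le_mul_sub_norm_reflH_sub hm hslope hxl.le (by linarith)
      (hxδ y (ball_subset_ball (by linarith) hy)) (hxy (hBR hy).1) hdiam.le
    rw [le_neg, neg_sub, div_le_iff₀ (exp_pos _)]
    nlinarith [mul_nonneg (mul_nonneg hm (sub_pos.2 hxl).le) (by linarith : 0 ≤ 2 * (y 0 - l) - r)]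

/-- For `α > N`, `diam Ω < e^(1/(N−α))`: if `Ω_λ` contains a ball `B` of positive radius
and `|x_λ − y| ≥ δ > 0` on `B`, then the difference quotient of the logarithmic Riesz
potential satisfies `(u(x_λ) − u(x))/(2(λ − x₁)) ≤ −C` for a constant `C > 0` independent
of `x`. -/
theorem log_riesz_difference_quotient_bound {N : ℕ} [NeZero N]
    (Ω : Set (EuclideanSpace ℝ (Fin N))) (hΩo : IsOpen Ω) (hΩb : Bornology.IsBounded Ω)
    (α : ℝ) (hα : (N : ℝ) < α) (hdiam : Metric.diam Ω < Real.exp (1 / ((N : ℝ) - α)))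
    (l : ℝ) (hrefl : reflH l '' sigmaL Ω l ⊆ Ω)
    (c : EuclideanSpace ℝ (Fin N)) (r : ℝ) (hr : 0 < r)
    (hB : Metric.ball c r ⊆ omegaL Ω l) (δ : ℝ) (hδ : 0 < δ) :
    ∃ C > 0, ∀ x ∈ Ω, x 0 < l →
      (∀ y ∈ Metric.ball c r, δ ≤ ‖reflH l x - y‖) →
      ((∫ y in Ω, ‖reflH l x - y‖ ^ (α - N) * Real.log (1 / ‖reflH l x - y‖))
          - ∫ y in Ω, ‖x - y‖ ^ (α - N) * Real.log (1 / ‖x - y‖)) / (2 * (l - x 0))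
        ≤ -C := by
  have hβ : 0 < α - N := sub_pos.2 hα
  have hdiam' : diam Ω < exp (-(1 / (α - N))) := by
    rwa [← one_div_neg_eq_neg_one_div, neg_sub]
  obtain ⟨m, hm, hslope⟩ := exists_pos_mul_sub_le_logRieszKernel_sub hβ hδ hdiam'
  have hvol : 0 < volume.real (ball c (r / 2)) :=
    ENNReal.toReal_pos (measure_ball_pos volume c (half_pos hr)).ne' measure_ball_lt_top.ne
  refine ⟨m * r * volume.real (ball c (r / 2)) / (2 * exp (-(1 / (α - N)))), by positivity,
    fun x hx hxl hxδ => ?_⟩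
  rw [div_le_iff₀ (by positivity)]
  calc _ ≤ _ := integral_logRieszKernel_reflH_sub_le hΩo hΩb hβ hdiam' hrefl hr hB hm.le hslope
        hx hxl hxδ
    _ = _ := by field_simp
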